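/- Let d, d_a be natural numbers, d₊ = d + d_a, and N = 2^{d₊}. Let E₁, …, E_n be Kraus-form quantum channels on N×N complex matrices, let Û₀ be a 2^d×2^d unitary matrix, and let Û₁, …, Û_n be N×N unitary matrices. Let σ be a 2^d×2^d density matrix, let a ∈ ℂ^{2^{d_a}} be a unit vector, and let Π be an N×N matrix with 0 ≤ Π ≤ I. Define y = Tr(Π · (E_n ∘ ⋯ ∘ E₁)(σ ⊗ aaᴴ)) and ŷ = Tr(Π · (Ad_{Û_n} ∘ E_n ∘ ⋯ ∘ Ad_{Û₁} ∘ E₁)((Û₀ σ Û₀ᴴ) ⊗ aaᴴ)), where Ad_U(ρ) = U ρ Uᴴ and ⊗ is the Kronecker product. Then |y − ŷ| ≤ inf_{φ₀ ∈ ℂ, |φ₀| = 1} ‖I_{2^d} − φ₀ Û₀‖₂ + Σ_{i=1}^n inf_{φ_i ∈ ℂ, |φ_i| = 1} ‖I_N − φ_i Û_i‖₂. -/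

import Mathlib

open Matrix
open scoped Kronecker ComplexOrder

/-- The Frobenius (Hilbert–Schmidt) norm of a complex matrix. -/
noncomputable def frobNorm {m n : ℕ} (A : Matrix (Fin m) (Fin n) ℂ) : ℝ :=
  Real.sqrt (∑ i, ∑ j, ‖A i j‖ ^ 2)

/-- A Kraus-form quantum channel: `Φ ρ = ∑ j, K j * ρ * (K j)ᴴ` for a finite family
of matrices with `∑ j, (K j)ᴴ * K j = 1`. -/
def IsKrausChannel {N : ℕ}
    (Φ : Matrix (Fin N) (Fin N) ℂ → Matrix (Fin N) (Fin N) ℂ) : Prop :=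
  ∃ (m : ℕ) (K : Fin m → Matrix (Fin N) (Fin N) ℂ),
    (∑ j, (K j)ᴴ * K j = 1) ∧ ∀ ρ, Φ ρ = ∑ j, K j * ρ * (K j)ᴴ

/-!
Write a density matrix as `σ = X Xᴴ` with `‖X‖₂ = 1`. For an effect `0 ≤ Q ≤ 1` the matrix
`S = 2Q - 1` is a contraction, and when `‖X‖₂ = ‖Y‖₂` polarization gives
`4 (tr (Q X Xᴴ) - tr (Q Y Yᴴ)) = tr ((X - Y)ᴴ S (X + Y)) + tr ((X + Y)ᴴ S (X - Y))`,
so by Cauchy–Schwarz for the trace inner product the two confidences differ by at most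
`‖X‖₂ ‖X - Y‖₂`. Conjugating `σ` by a unitary `V` replaces `X` by `φ V X` for any phase `φ`, and
`‖X - φ V X‖₂ ≤ ‖1 - φ V‖₂ ‖X‖₂`; composing with the isometry `x ↦ x ⊗ a` changes neither norm.
The channels that follow a gate are absorbed into the effect (Heisenberg picture), so replacing
the gates one at a time bounds `‖y - ŷ‖` by the sum of these terms for every choice of phases.
-/

open scoped Matrix.Norms.Frobenius

namespace Matrix

section Frobenius

variable {m n : Type*} [Fintype m] [Fintype n]

theorem frobenius_norm_eq_norm_toLp_vec (A : Matrix m n ℂ) : ‖A‖ = ‖WithLp.toLp 2 A.vec‖ := by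
  rw [frobenius_norm_def, EuclideanSpace.norm_eq, Real.sqrt_eq_rpow, Fintype.sum_prod_type,
    Finset.sum_comm]
  simp only [Real.rpow_two]
  rfl

theorem trace_conjTranspose_mul_eq_inner (A B : Matrix m n ℂ) :
    (Aᴴ * B).trace = inner ℂ (WithLp.toLp 2 A.vec) (WithLp.toLp 2 B.vec) := by
  rw [EuclideanSpace.inner_toLp_toLp, dotProduct_comm, star_vec_dotProduct_vec]

theorem norm_trace_conjTranspose_mul_le (A B : Matrix m n ℂ) :
    ‖(Aᴴ * B).trace‖ ≤ ‖A‖ * ‖B‖ := by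
  rw [trace_conjTranspose_mul_eq_inner, frobenius_norm_eq_norm_toLp_vec,
    frobenius_norm_eq_norm_toLp_vec]
  exact norm_inner_le_norm _ _

theorem trace_conjTranspose_mul_self (A : Matrix m n ℂ) : (Aᴴ * A).trace = (‖A‖ : ℂ) ^ 2 := by
  rw [trace_conjTranspose_mul_eq_inner, inner_self_eq_norm_sq_to_K,
    frobenius_norm_eq_norm_toLp_vec]
  rfl

theorem trace_mul_conjTranspose_self (A : Matrix m n ℂ) : (A * Aᴴ).trace = (‖A‖ : ℂ) ^ 2 := by
  rw [trace_mul_comm, trace_conjTranspose_mul_self]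

theorem frobenius_norm_mul_of_conjTranspose_mul_self_eq_one [DecidableEq n] {W : Matrix m n ℂ}
    (hW : Wᴴ * W = 1) {l : Type*} [Fintype l] (A : Matrix n l ℂ) : ‖W * A‖ = ‖A‖ := by
  have h : (‖W * A‖ : ℂ) ^ 2 = (‖A‖ : ℂ) ^ 2 := by
    rw [← trace_conjTranspose_mul_self, ← trace_conjTranspose_mul_self, conjTranspose_mul,
      Matrix.mul_assoc, ← Matrix.mul_assoc Wᴴ, hW, Matrix.one_mul]
  exact (pow_left_inj₀ (norm_nonneg _) (norm_nonneg _) two_ne_zero).mp (by exact_mod_cast h)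

theorem frobenius_norm_mul_le_of_posSemidef_one_sub [DecidableEq n] {S : Matrix m n ℂ}
    (hS : (1 - Sᴴ * S).PosSemidef) {l : Type*} [Fintype l] (A : Matrix n l ℂ) :
    ‖S * A‖ ≤ ‖A‖ := by
  have hA : (Aᴴ * (1 - Sᴴ * S) * A).trace = ((‖A‖ ^ 2 - ‖S * A‖ ^ 2 : ℝ) : ℂ) := by
    rw [Matrix.mul_sub, Matrix.sub_mul, Matrix.mul_one, trace_sub, trace_conjTranspose_mul_self,
      show Aᴴ * (Sᴴ * S) * A = (S * A)ᴴ * (S * A) by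
        simp only [conjTranspose_mul, Matrix.mul_assoc],
      trace_conjTranspose_mul_self]
    push_cast
    ring
  have h := (hS.conjTranspose_mul_mul_same A).trace_nonneg
  rw [hA, Complex.zero_le_real, sub_nonneg] at h
  exact (pow_le_pow_iff_left₀ (norm_nonneg _) (norm_nonneg _) two_ne_zero).mp h

end Frobenius

section States

variable {n : Type*} [Fintype n]

def IsEffect [DecidableEq n] (Q : Matrix n n ℂ) : Prop := Q.PosSemidef ∧ (1 - Q).PosSemidef

def IsDensity (ρ : Matrix n n ℂ) : Prop := ρ.PosSemidef ∧ ρ.trace = 1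

theorem IsDensity.exists_eq_mul_conjTranspose [DecidableEq n] {σ : Matrix n n ℂ} (hσ : σ.IsDensity) :
    ∃ X : Matrix n n ℂ, σ = X * Xᴴ ∧ ‖X‖ = 1 := by
  obtain ⟨B, hB⟩ : ∃ B : Matrix n n ℂ, σ = star B * B := by
    open scoped MatrixOrder in exact CStarAlgebra.nonneg_iff_eq_star_mul_self.mp hσ.1.nonneg
  refine ⟨Bᴴ, by rw [hB, conjTranspose_conjTranspose, star_eq_conjTranspose], ?_⟩
  have h : (‖Bᴴ‖ : ℂ) ^ 2 = 1 := by
    rw [← trace_mul_conjTranspose_self, conjTranspose_conjTranspose, ← star_eq_conjTranspose,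
      ← hB, hσ.2]
  exact (pow_eq_one_iff_of_nonneg (norm_nonneg _) two_ne_zero).mp (by exact_mod_cast h)

theorem IsDensity.mul_mul_conjTranspose {m : Type*} [Fintype m] [DecidableEq n]
    {σ : Matrix n n ℂ} (hσ : σ.IsDensity) {W : Matrix m n ℂ} (hW : Wᴴ * W = 1) :
    (W * σ * Wᴴ).IsDensity :=
  ⟨hσ.1.mul_mul_conjTranspose_same W, by rw [trace_mul_cycle, hW, Matrix.one_mul, hσ.2]⟩

variable [DecidableEq n] {Q : Matrix n n ℂ}

theorem IsEffect.frobenius_norm_two_nsmul_sub_one_mul_le (hQ : Q.IsEffect) {k : Type*}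
    [Fintype k] (A : Matrix n k ℂ) : ‖(2 • Q - 1) * A‖ ≤ ‖A‖ := by
  refine frobenius_norm_mul_le_of_posSemidef_one_sub ?_ A
  have hH : Qᴴ = Q := hQ.1.isHermitian
  have h : (1 - (2 • Q - 1)ᴴ * (2 • Q - 1) : Matrix n n ℂ) =
      4 • ((1 - Q)ᴴ * Q * (1 - Q) + Qᴴ * (1 - Q) * Q) := by
    simp only [conjTranspose_sub, conjTranspose_nsmul, conjTranspose_one, hH]
    noncomm_ring
  rw [h]
  exact ((hQ.1.conjTranspose_mul_mul_same _).add (hQ.2.conjTranspose_mul_mul_same _)).smul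
    (by norm_num)

theorem IsEffect.norm_trace_mul_sub_le (hQ : Q.IsEffect) {k : Type*} [Fintype k]
    {X Y : Matrix n k ℂ} (hXY : ‖X‖ = ‖Y‖) :
    ‖(Q * (X * Xᴴ)).trace - (Q * (Y * Yᴴ)).trace‖ ≤ ‖X‖ * ‖X - Y‖ := by
  set S := 2 • Q - 1
  have htr : ∀ Z : Matrix n k ℂ,
      (Zᴴ * S * Z).trace = 2 * (Q * (Z * Zᴴ)).trace - (‖Z‖ : ℂ) ^ 2 := fun Z => by
    rw [trace_mul_cycle, trace_mul_comm, Matrix.sub_mul, Matrix.one_mul, Matrix.smul_mul,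
      trace_sub, trace_smul, nsmul_eq_mul, Nat.cast_ofNat, trace_mul_conjTranspose_self]
  have hpol : (X - Y)ᴴ * (S * (X + Y)) + (X + Y)ᴴ * (S * (X - Y)) =
      2 • (Xᴴ * S * X - Yᴴ * S * Y) := by
    simp only [conjTranspose_sub, conjTranspose_add, Matrix.mul_add, Matrix.mul_sub,
      Matrix.add_mul, Matrix.sub_mul, Matrix.mul_assoc]
    abel
  have hid : 4 * ((Q * (X * Xᴴ)).trace - (Q * (Y * Yᴴ)).trace) =
      ((X - Y)ᴴ * (S * (X + Y))).trace + ((X + Y)ᴴ * (S * (X - Y))).trace := by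
    rw [← trace_add, hpol, trace_smul, trace_sub, htr, htr, hXY, nsmul_eq_mul, Nat.cast_ofNat]
    ring
  have hS := hQ.frobenius_norm_two_nsmul_sub_one_mul_le (k := k)
  have hsum : ‖X + Y‖ ≤ 2 * ‖X‖ := (norm_add_le _ _).trans_eq (by rw [hXY]; ring)
  have h4 : 4 * ‖(Q * (X * Xᴴ)).trace - (Q * (Y * Yᴴ)).trace‖ ≤ 4 * (‖X‖ * ‖X - Y‖) :=
    calc 4 * ‖(Q * (X * Xᴴ)).trace - (Q * (Y * Yᴴ)).trace‖
        = ‖((X - Y)ᴴ * (S * (X + Y))).trace + ((X + Y)ᴴ * (S * (X - Y))).trace‖ := by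
          rw [← hid, norm_mul, RCLike.norm_ofNat]
      _ ≤ ‖X - Y‖ * ‖S * (X + Y)‖ + ‖X + Y‖ * ‖S * (X - Y)‖ :=
          (norm_add_le _ _).trans
            (add_le_add (norm_trace_conjTranspose_mul_le _ _) (norm_trace_conjTranspose_mul_le _ _))
      _ ≤ ‖X - Y‖ * ‖X + Y‖ + ‖X + Y‖ * ‖X - Y‖ := by gcongr <;> exact hS _
      _ ≤ 4 * (‖X‖ * ‖X - Y‖) := by nlinarith [norm_nonneg (X - Y)]
  linarith

theorem IsEffect.norm_trace_mul_conj_sub_le {m : Type*} [Fintype m] [DecidableEq m]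
    (hQ : Q.IsEffect) {σ : Matrix m m ℂ} (hσ : σ.IsDensity) {W : Matrix n m ℂ}
    (hW : Wᴴ * W = 1) {V : Matrix m m ℂ} (hV : V ∈ unitaryGroup m ℂ) {φ : ℂ} (hφ : ‖φ‖ = 1) :
    ‖(Q * (W * σ * Wᴴ)).trace - (Q * (W * (V * σ * Vᴴ) * Wᴴ)).trace‖ ≤ ‖1 - φ • V‖ := by
  obtain ⟨X, rfl, hX⟩ := hσ.exists_eq_mul_conjTranspose
  have hφφ : star φ * φ = 1 := by
    rw [Complex.star_def, Complex.conj_mul', hφ]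
    norm_num
  have hφV : (φ • V)ᴴ * (φ • V) = 1 := by
    rw [conjTranspose_smul, Matrix.smul_mul, Matrix.mul_smul, smul_smul, hφφ, one_smul,
      ← star_eq_conjTranspose, mem_unitaryGroup_iff'.mp hV]
  have hWX : W * (X * Xᴴ) * Wᴴ = (W * X) * (W * X)ᴴ := by
    simp only [conjTranspose_mul, Matrix.mul_assoc]
  have hWVX : W * (V * (X * Xᴴ) * Vᴴ) * Wᴴ = (W * ((φ • V) * X)) * (W * ((φ • V) * X))ᴴ := by
    simp only [conjTranspose_mul, conjTranspose_smul, Matrix.smul_mul, Matrix.mul_smul, smul_smul,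
      hφφ, one_smul, Matrix.mul_assoc]
  have hnorm : ‖W * X‖ = ‖W * ((φ • V) * X)‖ := by
    rw [frobenius_norm_mul_of_conjTranspose_mul_self_eq_one hW,
      frobenius_norm_mul_of_conjTranspose_mul_self_eq_one hW,
      frobenius_norm_mul_of_conjTranspose_mul_self_eq_one hφV]
  calc _ ≤ ‖W * X‖ * ‖W * X - W * ((φ • V) * X)‖ := by
        rw [hWX, hWVX]
        exact hQ.norm_trace_mul_sub_le hnorm
    _ = ‖(1 - φ • V) * X‖ := by
        rw [← Matrix.mul_sub, frobenius_norm_mul_of_conjTranspose_mul_self_eq_one hW,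
          frobenius_norm_mul_of_conjTranspose_mul_self_eq_one hW, hX, one_mul, Matrix.sub_mul,
          Matrix.one_mul]
    _ ≤ ‖1 - φ • V‖ := (frobenius_norm_mul _ _).trans_eq (by rw [hX, mul_one])

end States

section KroneckerVec

variable {m k l : Type*} [Fintype m] [DecidableEq m]

def kroneckerVec (e : m × k ≃ l) (a : k → ℂ) : Matrix l m ℂ :=
  reindex e (Equiv.prodPUnit m) (1 ⊗ₖ replicateCol Unit a)

theorem reindex_kronecker_vecMulVec (e : m × k ≃ l) (a : k → ℂ) (ρ : Matrix m m ℂ) :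
    reindex e e (ρ ⊗ₖ vecMulVec a (star a)) = kroneckerVec e a * ρ * (kroneckerVec e a)ᴴ := by
  ext p q
  simp [kroneckerVec, mul_apply, one_apply, vecMulVec_apply, apply_ite (starRingEnd ℂ)]
  ring

theorem conjTranspose_kroneckerVec_mul_self [Fintype k] [Fintype l] (e : m × k ≃ l)
    {a : k → ℂ} (ha : ∑ i, ‖a i‖ ^ 2 = 1) : (kroneckerVec e a)ᴴ * kroneckerVec e a = 1 := by
  ext i j
  rw [mul_apply, ← e.sum_comp]
  by_cases hij : i = j
  · subst hij
    simp [kroneckerVec, one_apply, Fintype.sum_prod_type, Complex.conj_mul']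
    exact_mod_cast ha
  · simp [kroneckerVec, one_apply, Fintype.sum_prod_type, hij, Ne.symm hij]

end KroneckerVec

end Matrix

namespace IsKrausChannel

variable {N : ℕ} {Φ : Matrix (Fin N) (Fin N) ℂ → Matrix (Fin N) (Fin N) ℂ}

theorem isDensity (hΦ : IsKrausChannel Φ) {ρ : Matrix (Fin N) (Fin N) ℂ} (hρ : ρ.IsDensity) :
    (Φ ρ).IsDensity := by
  obtain ⟨m, K, hK, hΦK⟩ := hΦ
  rw [hΦK]
  refine ⟨posSemidef_sum _ fun j _ => hρ.1.mul_mul_conjTranspose_same (K j), ?_⟩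
  simp_rw [trace_sum, trace_mul_cycle (K _), ← trace_sum, ← Finset.sum_mul, hK, Matrix.one_mul]
  exact hρ.2

theorem exists_isEffect_trace_mul_eq (hΦ : IsKrausChannel Φ) {Q : Matrix (Fin N) (Fin N) ℂ}
    (hQ : Q.IsEffect) :
    ∃ Q' : Matrix (Fin N) (Fin N) ℂ, Q'.IsEffect ∧ ∀ ρ, (Q * Φ ρ).trace = (Q' * ρ).trace := by
  obtain ⟨m, K, hK, hΦK⟩ := hΦ
  refine ⟨∑ j, (K j)ᴴ * Q * K j, ⟨?_, ?_⟩, fun ρ => ?_⟩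
  · exact posSemidef_sum _ fun j _ => hQ.1.conjTranspose_mul_mul_same (K j)
  · have h : 1 - ∑ j, (K j)ᴴ * Q * K j = ∑ j, (K j)ᴴ * (1 - Q) * K j := by
      simp only [Matrix.mul_sub, Matrix.sub_mul, Matrix.mul_one, Finset.sum_sub_distrib, hK]
    rw [h]
    exact posSemidef_sum _ fun j _ => hQ.2.conjTranspose_mul_mul_same (K j)
  · rw [hΦK, Finset.mul_sum, Finset.sum_mul, trace_sum, trace_sum]
    refine Finset.sum_congr rfl fun j _ => ?_
    rw [show Q * (K j * ρ * (K j)ᴴ) = Q * K j * ρ * (K j)ᴴ by simp only [Matrix.mul_assoc],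
      trace_mul_comm]
    simp only [Matrix.mul_assoc]

theorem conj_unitary (hΦ : IsKrausChannel Φ) {U : Matrix (Fin N) (Fin N) ℂ}
    (hU : U ∈ unitaryGroup (Fin N) ℂ) : IsKrausChannel fun ρ => U * Φ ρ * Uᴴ := by
  obtain ⟨m, K, hK, hΦK⟩ := hΦ
  refine ⟨m, fun j => U * K j, ?_, fun ρ => ?_⟩
  · have hUU : Uᴴ * U = 1 := mem_unitaryGroup_iff'.mp hU
    simp only [conjTranspose_mul, Matrix.mul_assoc]
    simp only [← Matrix.mul_assoc Uᴴ, hUU, Matrix.one_mul, hK]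
  · simp only [hΦK, Finset.mul_sum, Finset.sum_mul, conjTranspose_mul, Matrix.mul_assoc]

end IsKrausChannel

section Layers

variable {N : ℕ}

theorem exists_isEffect_trace_mul_foldl_eq
    (Φs : List (Matrix (Fin N) (Fin N) ℂ → Matrix (Fin N) (Fin N) ℂ))
    (hΦs : ∀ Φ ∈ Φs, IsKrausChannel Φ) {Q : Matrix (Fin N) (Fin N) ℂ} (hQ : Q.IsEffect) :
    ∃ Q' : Matrix (Fin N) (Fin N) ℂ, Q'.IsEffect ∧
      ∀ ρ, (Q * Φs.foldl (fun ρ Φ => Φ ρ) ρ).trace = (Q' * ρ).trace := by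
  induction Φs with
  | nil => exact ⟨Q, hQ, fun ρ => rfl⟩
  | cons Φ Φs ih =>
    obtain ⟨Q₁, hQ₁, hQ₁tr⟩ := ih fun Ψ hΨ => hΦs Ψ (List.mem_cons_of_mem _ hΨ)
    obtain ⟨Q₂, hQ₂, hQ₂tr⟩ := (hΦs Φ List.mem_cons_self).exists_isEffect_trace_mul_eq hQ₁
    exact ⟨Q₂, hQ₂, fun ρ => (hQ₁tr (Φ ρ)).trans (hQ₂tr ρ)⟩

theorem norm_trace_mul_foldl_ofFn_sub_le {n : ℕ}
    {Φ Ψ : Fin n → Matrix (Fin N) (Fin N) ℂ → Matrix (Fin N) (Fin N) ℂ}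
    (hΦ : ∀ i, IsKrausChannel (Φ i)) (hΨ : ∀ i, IsKrausChannel (Ψ i)) {ε : Fin n → ℝ}
    (hε : ∀ i (Q ρ : Matrix (Fin N) (Fin N) ℂ), Q.IsEffect → ρ.IsDensity →
      ‖(Q * Φ i ρ).trace - (Q * Ψ i ρ).trace‖ ≤ ε i)
    {Q ρ : Matrix (Fin N) (Fin N) ℂ} (hQ : Q.IsEffect) (hρ : ρ.IsDensity) :
    ‖(Q * (List.ofFn Φ).foldl (fun ρ Φ => Φ ρ) ρ).trace -
        (Q * (List.ofFn Ψ).foldl (fun ρ Φ => Φ ρ) ρ).trace‖ ≤ ∑ i, ε i := by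
  induction n generalizing ρ with
  | zero => simp
  | succ n ih =>
    simp only [List.ofFn_succ, List.foldl_cons, Fin.sum_univ_succ]
    obtain ⟨Q', hQ', hQ'tr⟩ := exists_isEffect_trace_mul_foldl_eq (List.ofFn fun i => Ψ i.succ)
      (fun Ψ' hΨ' => by obtain ⟨i, rfl⟩ := List.mem_ofFn.mp hΨ'; exact hΨ i.succ) hQ
    calc _ ≤ ‖(Q * (List.ofFn fun i => Φ i.succ).foldl (fun ρ Φ => Φ ρ) (Φ 0 ρ)).trace -
            (Q * (List.ofFn fun i => Ψ i.succ).foldl (fun ρ Φ => Φ ρ) (Φ 0 ρ)).trace‖ +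
          ‖(Q' * Φ 0 ρ).trace - (Q' * Ψ 0 ρ).trace‖ := by
          rw [← hQ'tr, ← hQ'tr]
          exact norm_sub_le_norm_sub_add_norm_sub _ _ _
      _ ≤ ∑ i : Fin n, ε i.succ + ε 0 :=
          add_le_add (ih (fun i => hΦ i.succ) (fun i => hΨ i.succ) (fun i => hε i.succ)
            ((hΦ 0).isDensity hρ)) (hε 0 Q' ρ hQ' hρ)
      _ = ε 0 + ∑ i : Fin n, ε i.succ := add_comm _ _

end Layers

theorem le_sum_ciInf {S : Type*} [Nonempty S] {n : ℕ} (f : Fin n → S → ℝ) {x : ℝ}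
    (h : ∀ φ : Fin n → S, x ≤ ∑ i, f i (φ i)) : x ≤ ∑ i, ⨅ s, f i s := by
  induction n generalizing x with
  | zero => simpa using h finZeroElim
  | succ n ih =>
    rw [Fin.sum_univ_succ, ← sub_le_iff_le_add]
    refine le_ciInf fun s => sub_le_comm.mp <| ih (fun i => f i.succ) fun φ => ?_
    have := h (Fin.cons s φ)
    simp only [Fin.sum_univ_succ, Fin.cons_zero, Fin.cons_succ] at this
    linarith

theorem frobNorm_eq_norm {m n : ℕ} (A : Matrix (Fin m) (Fin n) ℂ) : frobNorm A = ‖A‖ := by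
  rw [frobNorm, frobenius_norm_def, Real.sqrt_eq_rpow]
  simp only [Real.rpow_two]

/-- Corollary 1: the shift in predictive confidence caused by inserting adversarial
unitary gates within the intermediate layers of a quantum classifier is bounded by
the sum of the phase-optimized Frobenius-norm distances of the gates to the identity. -/
theorem confidence_shift_frobNorm_bound (d da n : ℕ)
    (E : Fin n → Matrix (Fin (2 ^ (d + da))) (Fin (2 ^ (d + da))) ℂ →
      Matrix (Fin (2 ^ (d + da))) (Fin (2 ^ (d + da))) ℂ)
    (hE : ∀ i, IsKrausChannel (E i))
    (U0 : Matrix (Fin (2 ^ d)) (Fin (2 ^ d)) ℂ)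
    (hU0 : U0 ∈ Matrix.unitaryGroup (Fin (2 ^ d)) ℂ)
    (U : Fin n → Matrix (Fin (2 ^ (d + da))) (Fin (2 ^ (d + da))) ℂ)
    (hU : ∀ i, U i ∈ Matrix.unitaryGroup (Fin (2 ^ (d + da))) ℂ)
    (σ : Matrix (Fin (2 ^ d)) (Fin (2 ^ d)) ℂ)
    (hσ : σ.PosSemidef ∧ σ.trace = 1)
    (a : Fin (2 ^ da) → ℂ) (ha : ∑ i, ‖a i‖ ^ 2 = 1)
    (Pk : Matrix (Fin (2 ^ (d + da))) (Fin (2 ^ (d + da))) ℂ)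
    (hPk : Pk.PosSemidef ∧ (1 - Pk).PosSemidef)
    -- the Kronecker-product embedding `ρ ⊗ aaᴴ`, reindexed to live on `Fin (2 ^ (d + da))`
    (emb : Matrix (Fin (2 ^ d)) (Fin (2 ^ d)) ℂ →
      Matrix (Fin (2 ^ (d + da))) (Fin (2 ^ (d + da))) ℂ)
    (hemb : ∀ ρ, emb ρ =
      Matrix.reindex (finProdFinEquiv.trans (finCongr (pow_add 2 d da).symm))
        (finProdFinEquiv.trans (finCongr (pow_add 2 d da).symm))
        (ρ ⊗ₖ Matrix.vecMulVec a (star a)))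
    -- y : predictive confidence of the unattacked classifier
    (y : ℂ) (hy : y = Matrix.trace (Pk *
      (List.ofFn E).foldl (fun ρ Φ => Φ ρ) (emb σ)))
    -- ŷ : predictive confidence of the attacked classifier
    (yhat : ℂ) (hyhat : yhat = Matrix.trace (Pk *
      (List.ofFn (fun i => fun ρ => U i * E i ρ * (U i)ᴴ)).foldl (fun ρ Φ => Φ ρ)
        (emb (U0 * σ * U0ᴴ)))) :
    ‖y - yhat‖ ≤
      (⨅ φ : {z : ℂ // ‖z‖ = 1}, frobNorm (1 - (φ : ℂ) • U0)) +
        ∑ i, ⨅ φ : {z : ℂ // ‖z‖ = 1}, frobNorm (1 - (φ : ℂ) • U i) := by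
  simp only [frobNorm_eq_norm]
  set W := kroneckerVec (finProdFinEquiv.trans (finCongr (pow_add 2 d da).symm)) a
  have hW : Wᴴ * W = 1 := conjTranspose_kroneckerVec_mul_self _ ha
  have hembW : ∀ ρ, emb ρ = W * ρ * Wᴴ := fun ρ =>
    (hemb ρ).trans (reindex_kronecker_vecMulVec _ a ρ)
  have hσW : (emb σ).IsDensity := by
    rw [hembW]
    exact IsDensity.mul_mul_conjTranspose hσ hW
  have hAd : ∀ i, IsKrausChannel fun ρ => U i * E i ρ * (U i)ᴴ := fun i =>
    (hE i).conj_unitary (hU i)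
  obtain ⟨Q, hQ, hQtr⟩ := exists_isEffect_trace_mul_foldl_eq _
    (fun Ψ hΨ => by obtain ⟨i, rfl⟩ := List.mem_ofFn.mp hΨ; exact hAd i) hPk
  have hfixed : ∀ (φ₀ : {z : ℂ // ‖z‖ = 1}) (φ : Fin n → {z : ℂ // ‖z‖ = 1}),
      ‖y - yhat‖ ≤ ‖1 - (φ₀ : ℂ) • U0‖ + ∑ i, ‖1 - (φ i : ℂ) • U i‖ := by
    intro φ₀ φ
    have hlayers := norm_trace_mul_foldl_ofFn_sub_le hE hAd
      (fun i Q ρ hQ hρ => by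
        simpa using hQ.norm_trace_mul_conj_sub_le ((hE i).isDensity hρ) (W := 1) (by simp)
          (hU i) (φ i).2)
      hPk hσW
    rw [hy, hyhat, add_comm ‖_‖]
    refine (norm_sub_le_norm_sub_add_norm_sub _ _ _).trans (add_le_add hlayers ?_)
    rw [hQtr, hQtr, hembW, hembW]
    exact hQ.norm_trace_mul_conj_sub_le hσ hW hU0 φ₀.2
  have : Nonempty {z : ℂ // ‖z‖ = 1} := ⟨⟨1, norm_one⟩⟩
  exact sub_le_iff_le_add.mp <| le_ciInf fun φ₀ => sub_le_comm.mp <|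
    le_sum_ciInf _ fun φ => sub_le_iff_le_add'.mpr (hfixed φ₀ φ)
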